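/- Fix c ∈ [π/2, 2π] and define f₂(θ) := 1/cos θ + tan θ + c − π/2 − 2θ + 1. Then for every θ satisfying 0 ≤ θ ≤ c/2 − π/4 and θ < π/2, one has: f₂(θ) ≥ f₂(c/2 − π/4) if π/2 ≤ c ≤ 5π/6, and f₂(θ) ≥ f₂(π/6) = √3 + c − 5π/6 + 1 if 5π/6 < c ≤ 2π. That is, on this domain f₂ attains its minimum at θ = c/2 − π/4 or θ = π/6, respectively. -/

import Mathlib

open Real

/-- The length of the Type-2 (Isbell-type) inspection curve with deployment angle `θ`
for an arc of length `c`. -/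
noncomputable def f2 (c θ : ℝ) : ℝ :=
  1 / Real.cos θ + Real.tan θ + c - π/2 - 2*θ + 1

/-!
Up to an additive constant, `f2 c θ = (1 + sin θ) / cos θ - 2θ`, whose derivative
`(1 + sin θ) / cos θ ^ 2 - 2 = 1 / (1 - sin θ) - 2` has the sign of `sin θ - 1/2`. Hence `f2 c`
decreases on `[0, π/6]` and increases on `[π/6, π/2)`, and the constraint `θ ≤ c/2 - π/4` stops
short of `π/6` exactly when `c ≤ 5π/6`.
-/

open Set

lemma hasDerivAt_f2 (c : ℝ) {θ : ℝ} (hθ : cos θ ≠ 0) :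
    HasDerivAt (f2 c) ((1 + sin θ) / cos θ ^ 2 - 2) θ := by
  have hsec : HasDerivAt (fun x => 1 / cos x) (sin θ / cos θ ^ 2) θ := by
    simpa [one_div, neg_div, Pi.inv_def] using (hasDerivAt_cos θ).inv hθ
  have hlin : HasDerivAt (fun x : ℝ => c - π/2 - 2 * x + 1) (-2) θ := by
    simpa using ((hasDerivAt_id θ).const_mul 2).const_sub (c - π/2) |>.add_const 1
  have hsplit : f2 c = (fun x => 1 / cos x) + tan + fun x => c - π/2 - 2 * x + 1 := by
    funext x; simp only [f2, Pi.add_apply]; ring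
  rw [hsplit]
  exact ((hsec.add (hasDerivAt_tan hθ)).add hlin).congr_deriv (by ring)

lemma one_add_sin_div_cos_sq_lt_two {θ : ℝ} (hcos : cos θ ≠ 0) (hsin : sin θ < 1/2) :
    (1 + sin θ) / cos θ ^ 2 < 2 := by
  have hcos_sq : 0 < cos θ ^ 2 := by positivity
  rw [div_lt_iff₀ hcos_sq]
  rw [cos_sq'] at hcos_sq ⊢
  nlinarith

lemma two_lt_one_add_sin_div_cos_sq {θ : ℝ} (hcos : cos θ ≠ 0) (hsin : 1/2 < sin θ) :
    2 < (1 + sin θ) / cos θ ^ 2 := by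
  rw [lt_div_iff₀ (by positivity), cos_sq']
  nlinarith

lemma f2_strictAntiOn (c : ℝ) : StrictAntiOn (f2 c) (Icc 0 (π/6)) := by
  have hcos : ∀ x ∈ Icc 0 (π/6), cos x ≠ 0 := fun x hx =>
    (cos_pos_of_mem_Ioo ⟨by linarith [hx.1, pi_pos], by linarith [hx.2, pi_pos]⟩).ne'
  refine strictAntiOn_of_hasDerivWithinAt_neg (convex_Icc _ _)
    (fun x hx => (hasDerivAt_f2 c (hcos x hx)).continuousAt.continuousWithinAt)
    (fun x hx => (hasDerivAt_f2 c (hcos x (interior_subset hx))).hasDerivWithinAt) fun x hx => ?_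
  rw [interior_Icc] at hx
  have hsin : sin x < 1/2 := by
    rw [← sin_pi_div_six]
    exact sin_lt_sin_of_lt_of_le_pi_div_two (by linarith [hx.1, pi_pos]) (by linarith [pi_pos]) hx.2
  linarith [one_add_sin_div_cos_sq_lt_two (hcos x (Ioo_subset_Icc_self hx)) hsin]

lemma f2_strictMonoOn (c : ℝ) : StrictMonoOn (f2 c) (Ico (π/6) (π/2)) := by
  have hcos : ∀ x ∈ Ico (π/6) (π/2), cos x ≠ 0 := fun x hx =>
    (cos_pos_of_mem_Ioo ⟨by linarith [hx.1, pi_pos], hx.2⟩).ne'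
  refine strictMonoOn_of_hasDerivWithinAt_pos (convex_Ico _ _)
    (fun x hx => (hasDerivAt_f2 c (hcos x hx)).continuousAt.continuousWithinAt)
    (fun x hx => (hasDerivAt_f2 c (hcos x (interior_subset hx))).hasDerivWithinAt) fun x hx => ?_
  rw [interior_Ico] at hx
  have hsin : 1/2 < sin x := by
    rw [← sin_pi_div_six]
    exact sin_lt_sin_of_lt_of_le_pi_div_two (by linarith [pi_pos]) hx.2.le hx.1
  linarith [two_lt_one_add_sin_div_cos_sq (hcos x (Ioo_subset_Ico_self hx)) hsin]

lemma f2_pi_div_six_le (c : ℝ) {θ : ℝ} (h0 : 0 ≤ θ) (hπ : θ < π/2) : f2 c (π/6) ≤ f2 c θ := by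
  rcases le_total θ (π/6) with hle | hle
  · exact (f2_strictAntiOn c).antitoneOn ⟨h0, hle⟩ ⟨by positivity, le_rfl⟩ hle
  · exact (f2_strictMonoOn c).monotoneOn ⟨le_rfl, by linarith [pi_pos]⟩ ⟨hle, hπ⟩ hle

lemma one_div_cos_pi_div_six_add_tan_pi_div_six : 1 / cos (π/6) + tan (π/6) = √3 := by
  rw [cos_pi_div_six, tan_pi_div_six]
  field_simp
  norm_num

lemma f2_pi_div_six (c : ℝ) : f2 c (π/6) = √3 + c - 5*π/6 + 1 := by
  rw [f2, one_div_cos_pi_div_six_add_tan_pi_div_six]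
  ring

theorem f2_minimizers_general (c : ℝ) (θ : ℝ)
    (h1 : 0 ≤ θ) (h2 : θ ≤ c/2 - π/4) (h3 : θ < π/2) :
    (c ≤ 5*π/6 → f2 c (c/2 - π/4) ≤ f2 c θ) ∧
    (5*π/6 < c → f2 c (π/6) ≤ f2 c θ ∧ f2 c (π/6) = Real.sqrt 3 + c - 5*π/6 + 1) := by
  refine ⟨fun hc => ?_, fun _ => ⟨f2_pi_div_six_le c h1 h3, f2_pi_div_six c⟩⟩
  exact (f2_strictAntiOn c).antitoneOn ⟨h1, by linarith⟩ ⟨h1.trans h2, by linarith⟩ h2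

theorem f2_minimizers (c : ℝ) (hc : c ∈ Set.Icc (π/2) (2*π)) (θ : ℝ)
    (h1 : 0 ≤ θ) (h2 : θ ≤ c/2 - π/4) (h3 : θ < π/2) :
    (c ≤ 5*π/6 → f2 c (c/2 - π/4) ≤ f2 c θ) ∧
    (5*π/6 < c → f2 c (π/6) ≤ f2 c θ ∧ f2 c (π/6) = Real.sqrt 3 + c - 5*π/6 + 1) :=
  f2_minimizers_general c θ h1 h2 h3
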